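/- arXiv:2310.06029 — 3 statements merged into one kernel-verified Lean document; each statement's English description precedes it below -/
import Mathlib

section
/- Let a ∈ A with a ∈ I, p^m = 0 in A, and φ a ring endomorphism of A with φ(x) ≡ x^p (mod p). Then a^{p^r} ≡ φ^{r-m+1}(a^{p^{m-1}}) in A for all r ≥ m - 1. -/
private lemma iterate_frobenius_lift_mod_p (A : Type*) [CommRing A] (p : ℕ)
    (φ : A →+* A) (hφ : ∀ x : A, φ x - x ^ p ∈ Ideal.span {(p : A)})
    (a : A) : ∀ k : ℕ, (p : A) ∣ (⇑φ)^[k] a - a ^ p ^ k := by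
  intro k
  induction k with
  | zero => simp
  | succ k ih =>
    rw [Function.iterate_succ_apply']
    have h1 : (p : A) ∣ φ ((⇑φ)^[k] a) - ((⇑φ)^[k] a) ^ p := by
      simpa [Ideal.mem_span_singleton] using hφ ((⇑φ)^[k] a)
    have h2 : (p : A) ^ (1 + 1) ∣ ((⇑φ)^[k] a) ^ p ^ 1 - (a ^ p ^ k) ^ p ^ 1 :=
      dvd_sub_pow_of_dvd_sub ih 1
    simp only [pow_one] at h2
    have h2' : (p : A) ∣ ((⇑φ)^[k] a) ^ p - (a ^ p ^ k) ^ p :=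
      (dvd_pow_self (p : A) (by norm_num : (1 + 1) ≠ 0)).trans h2
    have h3 := dvd_add h1 h2'
    have heq : φ ((⇑φ)^[k] a) - ((⇑φ)^[k] a) ^ p
        + (((⇑φ)^[k] a) ^ p - (a ^ p ^ k) ^ p)
        = φ ((⇑φ)^[k] a) - a ^ p ^ (k + 1) := by
      rw [pow_succ, pow_mul]; ring
    rwa [heq] at h3

/-- If `p^m = 0` in `A` and `φ` is a Frobenius lift (`φ(x) ≡ x^p mod p`), then
for all `r ≥ m - 1` and all `a ∈ A`, `a^{p^r} = φ^{r-m+1}(a^{p^{m-1}})`. -/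
theorem pow_p_pow_eq_iterate_frobenius_lift (A : Type*) [CommRing A] (p m : ℕ)
    (hp : p.Prime) (hm : 1 ≤ m) (hpm : (p : A) ^ m = 0)
    (φ : A →+* A) (hφ : ∀ x : A, φ x - x ^ p ∈ Ideal.span {(p : A)})
    (a : A) :
    ∀ r : ℕ, m - 1 ≤ r → a ^ p ^ r = (⇑φ)^[r + 1 - m] (a ^ p ^ (m - 1)) := by
  intro r hr
  set k := r + 1 - m with hk
  have hrk : r = k + (m - 1) := by omega
  have hiter : (⇑φ)^[k] (a ^ p ^ (m - 1)) = ((⇑φ)^[k] a) ^ p ^ (m - 1) := by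
    induction k with
    | zero => simp
    | succ n ih =>
      rw [Function.iterate_succ_apply', ih, Function.iterate_succ_apply', map_pow]
  have hdvd : (p : A) ^ (m - 1 + 1) ∣ (a ^ p ^ k) ^ p ^ (m - 1) - ((⇑φ)^[k] a) ^ p ^ (m - 1) := by
    refine dvd_sub_pow_of_dvd_sub ?_ (m - 1)
    simpa using (iterate_frobenius_lift_mod_p A p φ hφ a k).neg_right
  have hm1 : m - 1 + 1 = m := by omega
  rw [hm1, hpm] at hdvd
  have hzero : (a ^ p ^ k) ^ p ^ (m - 1) - ((⇑φ)^[k] a) ^ p ^ (m - 1) = 0 :=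
    zero_dvd_iff.mp hdvd
  have : a ^ p ^ r = (a ^ p ^ k) ^ p ^ (m - 1) := by
    rw [← pow_mul, ← pow_add, ← hrk]
  rw [this, hiter, sub_eq_zero.mp hzero]
end

section
/- Let D be a filtered associative ring D = ∪_i D_{≤i} with D_{≤-1} = 0, containing a commutative subring O = D_{≤0}, such that the filtration is the commutator filtration: D_{≤i} = {Q ∈ D : [Q, f] ∈ D_{≤i-1} for all f ∈ O}. Suppose O has characteristic p. Then for any x ∈ D_{≤1}, the p-th power x^p again lies in D_{≤1}; more precisely, for all f_0, f_1 ∈ O, the iterated commutator [[x^p, f_0], f_1] = 0. -/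
open LieAlgebra Set

attribute [local instance] LieRing.ofAssociativeRing

/-- `ad x = mulLeft x - mulRight x` is a difference of commuting operators, so the Frobenius
identity `(a - b) ^ p = a ^ p - b ^ p` applies in `Module.End ℤ D`, which has characteristic `p`
because `D` embeds into it by left multiplication. -/
theorem LieAlgebra.ad_pow_char {D : Type*} [Ring D] (p : ℕ) [Fact p.Prime] [CharP D p] (x : D) :
    ad ℤ D x ^ p = ad ℤ D (x ^ p) := by
  have : CharP (Module.End ℤ D) p :=
    charP_of_injective_ringHom (f := (Algebra.lmul ℤ D).toRingHom) Algebra.lmul_injective p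
  rw [ad_eq_lmul_left_sub_lmul_right, Pi.sub_apply, Pi.sub_apply,
    sub_pow_char_of_commute _ (LinearMap.commute_mulLeft_right x x),
    LinearMap.pow_mulLeft, LinearMap.pow_mulRight]

theorem LieAlgebra.mapsTo_ad_pow_char {D : Type*} [Ring D] (p : ℕ) [Fact p.Prime] [CharP D p]
    {x : D} {O : Set D} (hx : MapsTo (ad ℤ D x) O O) : MapsTo (ad ℤ D (x ^ p)) O O := by
  rw [← ad_pow_char, Module.End.coe_pow]
  exact hx.iterate p

/-- Let `D` be an associative ring of characteristic `p`, `O ⊆ D` a commutative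
subring, and `x` an element with `[x, f] ∈ O` for all `f ∈ O` (i.e.
`x ∈ D_{≤1}` for the commutator filtration).  Then `x^p` again lies in
`D_{≤1}`: `[x^p, f] ∈ O` for all `f ∈ O`, and the iterated commutator
`[[x^p, f₀], f₁]` vanishes for all `f₀, f₁ ∈ O`. -/
theorem pow_p_mem_degree_one (p : ℕ) (hp : p.Prime) (D : Type*) [Ring D]
    [CharP D p] (O : Subring D)
    (hcomm : ∀ f ∈ O, ∀ g ∈ O, f * g = g * f)
    (x : D) (hx : ∀ f ∈ O, x * f - f * x ∈ O) :
    (∀ f ∈ O, x ^ p * f - f * x ^ p ∈ O) ∧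
    (∀ f₀ ∈ O, ∀ f₁ ∈ O,
      (x ^ p * f₀ - f₀ * x ^ p) * f₁ - f₁ * (x ^ p * f₀ - f₀ * x ^ p) = 0) := by
  have : Fact p.Prime := ⟨hp⟩
  have hxp : MapsTo (ad ℤ D (x ^ p)) O O := mapsTo_ad_pow_char p hx
  exact ⟨hxp, fun f₀ hf₀ f₁ hf₁ => sub_eq_zero.mpr (hcomm _ (hxp hf₀) _ hf₁)⟩
end

section
/- Let k be a perfect field of characteristic p and X a smooth affine variety over k with étale coordinates t_1,…,t_n (i.e. an étale map to affine n-space), with dual derivations ∂_1,…,∂_n. Then the ring Diff_X^r of Grothendieck differential operators commuting with p^r-th powers of functions, Diff_X^r = End_{O_X^{p^r}}(O_X), is a free module over O_X^{(r)} = {f^{p^r} : f ∈ O_X}-generated subring of rank p^{2rn}, with basis given by the operators t^a ∂^{(b)} = t_1^{a_1}⋯t_n^{a_n} ∂_1^{(b_1)}⋯∂_n^{(b_n)} for 0 ≤ a_j, b_j < p^r, where ∂^{(b)} denotes divided power differential operators. -/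
/-!
An operator `T` commuting with `p^r`-th powers is determined by the values `v a = T (t^a)` for
`a_j < p^r`, because the monomials `t^a` span `k[t]` over the `p^r`-th powers (over a perfect
field, a polynomial in the `t_j^{p^r}` is itself a `p^r`-th power). On `t^{a'}` the operator
`∑ c_{ab} t^a ∂^{(b)}` takes the value `∑_b M_{a'b} w_b`, where `w_b = ∑_a c_{ab} t^a` and
`M_{a'b} = ∂^{(b)} t^{a'} = ∏_j C(a'_j, b_j) t_j^{a'_j - b_j}`. This `M` is the tensor product over
`j` of the matrices of `f(Y) ↦ f(Y + t_j)` on polynomials of degree `< p^r`, so it is invertible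
with inverse coming from `Y ↦ Y - t_j`. Hence `w`, and with it `c`, is determined by `v`, and
every `v` occurs. Conversely `∂^{(b)}` commutes with `p^r`-th powers when `b_j < p^r`, by the
congruence `C(p^r s + m, b) ≡ C(m, b)`, which follows from `(1 + X)^{p^r} = 1 + X^{p^r}`.
-/

open Finset

open Polynomial in
theorem natCast_choose_expChar_pow_mul_add {R : Type*} [CommRing R] {p : ℕ} [ExpChar R p]
    {r b : ℕ} (hb : b < p ^ r) (s m : ℕ) :
    (((p ^ r * s + m).choose b : ℕ) : R) = (m.choose b : R) := by
  obtain ⟨f, hf⟩ : (X : R[X]) ^ p ^ r ∣ (1 + X) ^ (p ^ r * s) - 1 := by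
    have h := sub_dvd_pow_sub_pow ((1 + X : R[X]) ^ p ^ r) 1 s
    rwa [← pow_mul, add_pow_expChar_pow, one_pow, one_pow, add_sub_cancel_left] at h
  have h : (1 + X : R[X]) ^ (p ^ r * s + m) = (1 + X) ^ m + X ^ p ^ r * (f * (1 + X) ^ m) := by
    rw [pow_add, ← sub_add_cancel ((1 + X : R[X]) ^ (p ^ r * s)) 1, hf]
    ring
  simpa only [coeff_add, coeff_one_add_X_pow, coeff_X_pow_mul', if_neg (not_le.mpr hb),
    add_zero] using congrArg (coeff · b) h

namespace Matrix

variable {ι m n o R : Type*} [Fintype ι] [CommSemiring R]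

def piKronecker (P : ι → Matrix m n R) : Matrix (ι → m) (ι → n) R :=
  of fun a b => ∏ i, P i (a i) (b i)

theorem piKronecker_apply (P : ι → Matrix m n R) (a : ι → m) (b : ι → n) :
    piKronecker P a b = ∏ i, P i (a i) (b i) := rfl

theorem piKronecker_mul [DecidableEq ι] [Fintype n] (P : ι → Matrix m n R)
    (Q : ι → Matrix n o R) :
    piKronecker P * piKronecker Q = piKronecker fun i => P i * Q i := by
  ext a c
  simp only [mul_apply, piKronecker_apply, ← prod_mul_distrib, Fintype.prod_sum]

theorem piKronecker_one [DecidableEq m] :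
    piKronecker (fun _ : ι => (1 : Matrix m m R)) = 1 := by
  ext a b
  simp only [piKronecker_apply, one_apply, prod_boole, mem_univ, true_imp_iff, funext_iff]

end Matrix

section Taylor

open Polynomial

variable {R : Type*} [CommRing R]

/-- The matrix of `f(Y) ↦ f(Y + r)` on polynomials of degree `< q`. -/
noncomputable def taylorMatrix (q : ℕ) (r : R) : Matrix (Fin q) (Fin q) R :=
  Matrix.of fun a c => ((X + C r) ^ (a : ℕ)).coeff c

theorem taylorMatrix_mul (q : ℕ) (r s : R) :
    taylorMatrix q r * taylorMatrix q s = taylorMatrix q (s + r) := by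
  ext a b
  have hdeg : ((X + C r) ^ (a : ℕ)).natDegree < q :=
    (natDegree_pow_le_of_le _ ((natDegree_add_C).trans_le natDegree_X_le)).trans_lt
      (by simp)
  have hcomp : (X + C (s + r)) ^ (a : ℕ) = ((X + C r) ^ (a : ℕ)).comp (X + C s) := by
    rw [pow_comp, add_comp, X_comp, C_comp, C_add, add_assoc]
  simp only [taylorMatrix, Matrix.mul_apply, Matrix.of_apply]
  rw [hcomp, comp_eq_sum_left, sum_over_range' _ (fun _ => by rw [C_0, zero_mul]) q hdeg,
    finsetSum_coeff, ← Fin.sum_univ_eq_sum_range]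
  simp only [coeff_C_mul]

theorem taylorMatrix_zero (q : ℕ) : taylorMatrix q (0 : R) = 1 := by
  ext a b
  simp only [taylorMatrix, Matrix.of_apply, C_0, add_zero, coeff_X_pow, Matrix.one_apply,
    Fin.ext_iff, eq_comm]

theorem taylorMatrix_mul_neg (q : ℕ) (r : R) : taylorMatrix q r * taylorMatrix q (-r) = 1 := by
  rw [taylorMatrix_mul, neg_add_cancel, taylorMatrix_zero]

end Taylor

namespace MvPolynomial

variable {σ R : Type*} [Fintype σ] [CommRing R]

theorem prod_X_pow_eq_monomial_one (e : σ → ℕ) :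
    ∏ j, X j ^ e j = monomial (Finsupp.equivFunOnFinite.symm e) (1 : R) := by
  rw [monomial_eq, C_1, one_mul, Finsupp.prod_fintype _ _ fun _ => pow_zero _]
  rfl

noncomputable def hasseDeriv (b : σ → ℕ) : MvPolynomial σ R →ₗ[R] MvPolynomial σ R :=
  (basisMonomials σ R).constr R fun m =>
    monomial (m - Finsupp.equivFunOnFinite.symm b) ((∏ j, (m j).choose (b j) : ℕ) : R)

theorem hasseDeriv_monomial (b : σ → ℕ) (m : σ →₀ ℕ) (c : R) :
    hasseDeriv b (monomial m c) =
      monomial (m - Finsupp.equivFunOnFinite.symm b) (c * ∏ j, ((m j).choose (b j) : R)) := by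
  have h : monomial m (1 : R) = basisMonomials σ R m := by rw [coe_basisMonomials]
  rw [← mul_one c, ← smul_eq_mul, ← smul_monomial, map_smul, h, hasseDeriv,
    Module.Basis.constr_basis, smul_monomial, Nat.cast_prod, smul_eq_mul, smul_eq_mul, mul_one]

theorem hasseDeriv_monomial_pow_mul {p : ℕ} [ExpChar R p] {r : ℕ} {b : σ → ℕ}
    (hb : ∀ j, b j < p ^ r) (s m : σ →₀ ℕ) (a c : R) :
    hasseDeriv b (monomial s a ^ p ^ r * monomial m c) =
      monomial s a ^ p ^ r * hasseDeriv b (monomial m c) := by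
  have hchoose : ∀ j, (((p ^ r • s + m) j).choose (b j) : R) = ((m j).choose (b j) : R) :=
    fun j => natCast_choose_expChar_pow_mul_add (hb j) (s j) (m j)
  rw [monomial_pow, monomial_mul, hasseDeriv_monomial, hasseDeriv_monomial, monomial_mul,
    Finset.prod_congr rfl fun j _ => hchoose j, mul_assoc]
  by_cases hbm : Finsupp.equivFunOnFinite.symm b ≤ m
  · rw [add_tsub_assoc_of_le hbm]
  · obtain ⟨j, hj⟩ : ∃ j, m j < b j := by
      simpa [Finsupp.le_def] using hbm
    rw [Finset.prod_eq_zero (mem_univ j) (by rw [Nat.choose_eq_zero_of_lt hj, Nat.cast_zero])]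
    simp

theorem hasseDeriv_pow_mul {p : ℕ} [ExpChar R p] {r : ℕ} {b : σ → ℕ} (hb : ∀ j, b j < p ^ r)
    (g f : MvPolynomial σ R) : hasseDeriv b (g ^ p ^ r * f) = g ^ p ^ r * hasseDeriv b f := by
  induction g using induction_on' generalizing f with
  | add g₁ g₂ h₁ h₂ => rw [add_pow_expChar_pow, add_mul, map_add, h₁, h₂, add_mul]
  | monomial s a =>
    induction f using induction_on' with
    | add f₁ f₂ h₁ h₂ => rw [mul_add, map_add, h₁, h₂, map_add, mul_add]
    | monomial m c => exact hasseDeriv_monomial_pow_mul hb s m a c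

theorem hasseDeriv_prod_X_pow {q : ℕ} (a b : σ → Fin q) :
    hasseDeriv (fun j => (b j : ℕ)) (∏ j, X j ^ (a j : ℕ)) =
      Matrix.piKronecker (fun j => taylorMatrix q (X j : MvPolynomial σ R)) a b := by
  rw [prod_X_pow_eq_monomial_one, hasseDeriv_monomial, one_mul, Matrix.piKronecker_apply]
  simp only [taylorMatrix, Matrix.of_apply, Polynomial.coeff_X_add_C_pow, prod_mul_distrib,
    prod_X_pow_eq_monomial_one, ← map_natCast (C : R →+* MvPolynomial σ R), ← map_prod]
  rw [mul_comm, C_mul_monomial, mul_one]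
  congr 2
  ext j
  simp

theorem ext_of_pow_mul {q : ℕ} (hq : 0 < q)
    {T₁ T₂ : MvPolynomial σ R →ₗ[R] MvPolynomial σ R}
    (h₁ : ∀ g f, T₁ (g ^ q * f) = g ^ q * T₁ f) (h₂ : ∀ g f, T₂ (g ^ q * f) = g ^ q * T₂ f)
    (h : ∀ a : σ → Fin q, T₁ (∏ j, X j ^ (a j : ℕ)) = T₂ (∏ j, X j ^ (a j : ℕ))) :
    T₁ = T₂ := by
  refine (basisMonomials σ R).ext fun m => ?_
  have hm : basisMonomials σ R m =
      (∏ j, X j ^ (m j / q)) ^ q * ∏ j, X j ^ ((⟨m j % q, Nat.mod_lt _ hq⟩ : Fin q) : ℕ) := by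
    simp only [coe_basisMonomials]
    conv_lhs => rw [← Finsupp.equivFunOnFinite_symm_coe m, ← prod_X_pow_eq_monomial_one]
    rw [← prod_pow, ← prod_mul_distrib]
    refine prod_congr rfl fun j _ => ?_
    rw [← pow_mul, ← pow_add, mul_comm, Nat.div_add_mod]
  rw [hm, h₁, h₂, h]

/-- The coefficient of `t^a` when `f` is written over the subring `R[t_1^q, …, t_n^q]`. -/
noncomputable def residue (q : ℕ) (a : σ → Fin q) : MvPolynomial σ R →ₗ[R] MvPolynomial σ R :=
  (basisMonomials σ R).constr R fun m =>
    if ∀ j, m j % q = a j then monomial (m - Finsupp.equivFunOnFinite.symm (a · : σ → ℕ)) 1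
    else 0

theorem residue_monomial (q : ℕ) (a : σ → Fin q) (m : σ →₀ ℕ) (c : R) :
    residue q a (monomial m c) =
      if ∀ j, m j % q = a j then monomial (m - Finsupp.equivFunOnFinite.symm (a · : σ → ℕ)) c
      else 0 := by
  have h : monomial m (1 : R) = basisMonomials σ R m := by rw [coe_basisMonomials]
  rw [← mul_one c, ← smul_eq_mul, ← smul_monomial, map_smul, h, residue,
    Module.Basis.constr_basis, smul_ite, smul_monomial, smul_zero]

theorem sum_residue_mul_prod_X_pow [DecidableEq σ] {q : ℕ} (hq : 0 < q) (f : MvPolynomial σ R) :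
    ∑ a : σ → Fin q, residue q a f * ∏ j, X j ^ (a j : ℕ) = f := by
  induction f using induction_on' with
  | add f g hf hg => simp only [map_add, add_mul, sum_add_distrib, hf, hg]
  | monomial m c =>
    set a₀ : σ → Fin q := fun j => ⟨m j % q, Nat.mod_lt _ hq⟩
    have hm : m - Finsupp.equivFunOnFinite.symm (a₀ · : σ → ℕ) +
        Finsupp.equivFunOnFinite.symm (a₀ · : σ → ℕ) = m :=
      tsub_add_cancel_of_le fun j => Nat.mod_le (m j) q
    rw [Fintype.sum_eq_single a₀ fun a ha => ?_]
    · rw [residue_monomial, if_pos fun j => rfl, prod_X_pow_eq_monomial_one, monomial_mul, hm,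
        mul_one]
    · rw [residue_monomial, if_neg, zero_mul]
      exact fun h => ha (_root_.funext fun j => Fin.ext (h j).symm)

section ExpChar

variable {p : ℕ} [ExpChar R p] (r : ℕ)

theorem exists_pow_eq_residue [PerfectRing R p] (a : σ → Fin (p ^ r)) (f : MvPolynomial σ R) :
    ∃ y, y ^ p ^ r = residue (p ^ r) a f := by
  induction f using induction_on' with
  | add f g hf hg =>
    obtain ⟨y, hy⟩ := hf
    obtain ⟨z, hz⟩ := hg
    exact ⟨y + z, by rw [add_pow_expChar_pow, hy, hz, map_add]⟩
  | monomial m c =>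
    rw [residue_monomial]
    split_ifs with h
    · refine ⟨monomial (Finsupp.equivFunOnFinite.symm fun j => m j / p ^ r)
        ((iterateFrobeniusEquiv R p r).symm c), ?_⟩
      have hexp : p ^ r • Finsupp.equivFunOnFinite.symm (fun j => m j / p ^ r) =
          m - Finsupp.equivFunOnFinite.symm (a · : σ → ℕ) := by
        ext j
        have := Nat.div_add_mod (m j) (p ^ r)
        simp only [Finsupp.smul_apply, Finsupp.tsub_apply, Finsupp.coe_equivFunOnFinite_symm,
          smul_eq_mul, ← h j]
        omega
      rw [monomial_pow, ← iterateFrobeniusEquiv_def, RingEquiv.apply_symm_apply, hexp]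
    · exact ⟨0, zero_pow (pow_pos (expChar_pos R p) r).ne'⟩

theorem residue_pow_mul_prod_X_pow (a a' : σ → Fin (p ^ r)) (y : MvPolynomial σ R) :
    residue (p ^ r) a (y ^ p ^ r * ∏ j, X j ^ (a' j : ℕ)) = if a = a' then y ^ p ^ r else 0 := by
  induction y using induction_on' with
  | add f g hf hg =>
    rw [add_pow_expChar_pow, add_mul, map_add, hf, hg]
    split_ifs <;> simp
  | monomial m c =>
    have hexp : ∀ j, (p ^ r • m + Finsupp.equivFunOnFinite.symm (a' · : σ → ℕ)) j =
        p ^ r * m j + a' j := fun j => rfl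
    have hres : (∀ j, (p ^ r * m j + a' j) % p ^ r = a j) ↔ a = a' := by
      simp only [Nat.mul_add_mod, Nat.mod_eq_of_lt (a' _).isLt, eq_comm (b := (a _ : ℕ))]
      exact ⟨fun h => _root_.funext fun j => Fin.ext (h j), by rintro rfl _; rfl⟩
    rw [prod_X_pow_eq_monomial_one, monomial_pow, monomial_mul, mul_one, residue_monomial]
    simp only [hexp, hres]
    split_ifs with h
    · subst h
      rw [add_tsub_cancel_right]
    · rfl

theorem residue_sum_mul_prod_X_pow [DecidableEq σ] (c : (σ → Fin (p ^ r)) → MvPolynomial σ R)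
    (hc : ∀ a, ∃ y, y ^ p ^ r = c a) (a : σ → Fin (p ^ r)) :
    residue (p ^ r) a (∑ a', c a' * ∏ j, X j ^ (a' j : ℕ)) = c a := by
  rw [map_sum, Fintype.sum_eq_single a fun a' ha' => ?_]
  · obtain ⟨y, hy⟩ := hc a
    rw [← hy, residue_pow_mul_prod_X_pow, if_pos rfl]
  · obtain ⟨y, hy⟩ := hc a'
    rw [← hy, residue_pow_mul_prod_X_pow, if_neg (Ne.symm ha')]

end ExpChar

variable [DecidableEq σ]

noncomputable def diffOp {q : ℕ} (c : (σ → Fin q) × (σ → Fin q) → MvPolynomial σ R) :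
    MvPolynomial σ R →ₗ[R] MvPolynomial σ R :=
  ∑ ab, LinearMap.mulLeft R (c ab * ∏ j, X j ^ (ab.1 j : ℕ)) ∘ₗ hasseDeriv fun j => (ab.2 j : ℕ)

theorem diffOp_pow_mul {p : ℕ} [ExpChar R p] {r : ℕ}
    (c : (σ → Fin (p ^ r)) × (σ → Fin (p ^ r)) → MvPolynomial σ R) (g f : MvPolynomial σ R) :
    diffOp c (g ^ p ^ r * f) = g ^ p ^ r * diffOp c f := by
  simp only [diffOp, LinearMap.sum_apply, LinearMap.comp_apply, LinearMap.mulLeft_apply, mul_sum]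
  refine sum_congr rfl fun ab _ => ?_
  rw [hasseDeriv_pow_mul fun j => (ab.2 j).isLt, mul_left_comm]

theorem diffOp_prod_X_pow {q : ℕ} (c : (σ → Fin q) × (σ → Fin q) → MvPolynomial σ R)
    (a' : σ → Fin q) :
    diffOp c (∏ j, X j ^ (a' j : ℕ)) =
      Matrix.mulVec (Matrix.piKronecker fun j => taylorMatrix q (X j : MvPolynomial σ R))
        (fun b => ∑ a, c (a, b) * ∏ j, X j ^ (a j : ℕ)) a' := by
  simp only [diffOp, LinearMap.sum_apply, LinearMap.comp_apply, LinearMap.mulLeft_apply,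
    hasseDeriv_prod_X_pow, Matrix.mulVec, dotProduct, Fintype.sum_prod_type_right, mul_sum]
  exact sum_congr rfl fun b _ => sum_congr rfl fun a _ => mul_comm _ _

theorem existsUnique_diffOp_eq {p : ℕ} [ExpChar R p] [PerfectRing R p] {r : ℕ}
    (T : MvPolynomial σ R →ₗ[R] MvPolynomial σ R)
    (hT : ∀ g f, T (g ^ p ^ r * f) = g ^ p ^ r * T f) :
    ∃! c : (σ → Fin (p ^ r)) × (σ → Fin (p ^ r)) → MvPolynomial σ R,
      (∀ ab, ∃ y, y ^ p ^ r = c ab) ∧ T = diffOp c := by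
  have hq : 0 < p ^ r := pow_pos (expChar_pos R p) r
  set M := Matrix.piKronecker fun j => taylorMatrix (p ^ r) (X j : MvPolynomial σ R)
  set N := Matrix.piKronecker fun j => taylorMatrix (p ^ r) (-X j : MvPolynomial σ R)
  have hMN : M * N = 1 := by
    simp only [M, N, Matrix.piKronecker_mul, taylorMatrix_mul_neg, Matrix.piKronecker_one]
  have hNM : N * M = 1 := mul_eq_one_comm.mp hMN
  set v : (σ → Fin (p ^ r)) → MvPolynomial σ R := fun a => T (∏ j, X j ^ (a j : ℕ))
  refine ⟨fun ab => residue (p ^ r) ab.1 (N.mulVec v ab.2),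
    ⟨fun ab => exists_pow_eq_residue r _ _, ?_⟩, ?_⟩
  · refine ext_of_pow_mul hq hT (diffOp_pow_mul _) fun a' => ?_
    rw [diffOp_prod_X_pow]
    simp only [sum_residue_mul_prod_X_pow hq]
    rw [Matrix.mulVec_mulVec, hMN, Matrix.one_mulVec]
  · rintro c ⟨hc, rfl⟩
    have hw : (fun b => ∑ a, c (a, b) * ∏ j, X j ^ (a j : ℕ)) = N.mulVec v := by
      have hv : v = M.mulVec fun b => ∑ a, c (a, b) * ∏ j, X j ^ (a j : ℕ) :=
        _root_.funext fun a' => diffOp_prod_X_pow c a'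
      rw [hv, Matrix.mulVec_mulVec, hNM, Matrix.one_mulVec]
    refine _root_.funext fun ⟨a, b⟩ => ?_
    rw [← hw, residue_sum_mul_prod_X_pow r (fun a => c (a, b)) fun a => hc (a, b)]

end MvPolynomial

theorem diff_r_free_basis_general (p : ℕ) (k : Type*) [Field k]
    [ExpChar k p] [PerfectRing k p] (n r : ℕ) :
    ∃ H : (Fin n → ℕ) → (MvPolynomial (Fin n) k →ₗ[k] MvPolynomial (Fin n) k),
      (∀ (b : Fin n → ℕ) (m : Fin n →₀ ℕ),
        H b (MvPolynomial.monomial m 1) =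
          MvPolynomial.monomial (m - Finsupp.equivFunOnFinite.symm b)
            ((∏ j : Fin n, (m j).choose (b j) : ℕ) : k)) ∧
      ∀ T : MvPolynomial (Fin n) k →ₗ[k] MvPolynomial (Fin n) k,
        (∀ g f : MvPolynomial (Fin n) k, T (g ^ p ^ r * f) = g ^ p ^ r * T f) ↔
        ∃! c : (Fin n → Fin (p ^ r)) × (Fin n → Fin (p ^ r)) →
            MvPolynomial (Fin n) k,
          (∀ ab, ∃ y : MvPolynomial (Fin n) k, y ^ p ^ r = c ab) ∧
          T = ∑ ab : (Fin n → Fin (p ^ r)) × (Fin n → Fin (p ^ r)),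
            (LinearMap.mulLeft k
                (c ab * ∏ j : Fin n, MvPolynomial.X j ^ (ab.1 j : ℕ))) ∘ₗ
              H (fun j => (ab.2 j : ℕ)) := by
  refine ⟨MvPolynomial.hasseDeriv,
    fun b m => by rw [MvPolynomial.hasseDeriv_monomial, one_mul, Nat.cast_prod],
    fun T => ⟨MvPolynomial.existsUnique_diffOp_eq T, ?_⟩⟩
  rintro ⟨c, ⟨-, rfl⟩, -⟩
  exact MvPolynomial.diffOp_pow_mul c

/-- Over `A = k[t_1,…,t_n]` in characteristic `p`, the ring
`Diff^r = End_{A^{p^r}}(A)` of differential operators commuting with `p^r`-th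
powers of functions is a free module of rank `p^{2rn}` over the subring of
`p^r`-th powers, with basis the operators `t^a ∂^{(b)}` for
`0 ≤ a_j, b_j < p^r`.  Here `∂^{(b)}` are the divided power (Hasse) operators,
characterized by `∂^{(b)}(t^m) = (∏_j C(m_j, b_j)) t^{m-b}`. -/
theorem diff_r_free_basis (p : ℕ) (hp : p.Prime) (k : Type*) [Field k]
    [ExpChar k p] [PerfectRing k p] (n r : ℕ) (hr : 1 ≤ r) :
    ∃ H : (Fin n → ℕ) → (MvPolynomial (Fin n) k →ₗ[k] MvPolynomial (Fin n) k),
      (∀ (b : Fin n → ℕ) (m : Fin n →₀ ℕ),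
        H b (MvPolynomial.monomial m 1) =
          MvPolynomial.monomial (m - Finsupp.equivFunOnFinite.symm b)
            ((∏ j : Fin n, (m j).choose (b j) : ℕ) : k)) ∧
      ∀ T : MvPolynomial (Fin n) k →ₗ[k] MvPolynomial (Fin n) k,
        (∀ g f : MvPolynomial (Fin n) k, T (g ^ p ^ r * f) = g ^ p ^ r * T f) ↔
        ∃! c : (Fin n → Fin (p ^ r)) × (Fin n → Fin (p ^ r)) →
            MvPolynomial (Fin n) k,
          (∀ ab, ∃ y : MvPolynomial (Fin n) k, y ^ p ^ r = c ab) ∧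
          T = ∑ ab : (Fin n → Fin (p ^ r)) × (Fin n → Fin (p ^ r)),
            (LinearMap.mulLeft k
                (c ab * ∏ j : Fin n, MvPolynomial.X j ^ (ab.1 j : ℕ))) ∘ₗ
              H (fun j => (ab.2 j : ℕ)) :=
  diff_r_free_basis_general p k n r
end
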